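/- arXiv:2404.19177 — 4 statements merged into one kernel-verified Lean document; each statement's English description precedes it below -/
import Mathlib

section
/- Every derivation of the Lie algebra h28 = (0,0,12,13,14,15) is lower triangular with respect to the basis e1,...,e6; in particular the derivation algebra Der(h28) is a solvable Lie algebra. -/
open Submodule

abbrev V6 : Type := Fin 6 → ℝ

def e (i : Fin 6) : V6 := Pi.single i 1

/-- Bracket of h28 = (0,0,12,13,14,15): [e1,e2]=e3, [e1,e3]=e4, [e1,e4]=e5, [e1,e5]=e6. -/
def br (x y : V6) : V6 :=
  ![0, 0, x 0 * y 1 - x 1 * y 0, x 0 * y 2 - x 2 * y 0,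
    x 0 * y 3 - x 3 * y 0, x 0 * y 4 - x 4 * y 0]

/-- `D` is a derivation of the Lie algebra. -/
def IsDeriv (D : V6 →ₗ[ℝ] V6) : Prop :=
  ∀ x y, D (br x y) = br (D x) y + br x (D y)

/-- Derived series (in set form) of the derivation algebra inside `End`. -/
def ds : ℕ → Set (V6 →ₗ[ℝ] V6)
  | 0 => {D | IsDeriv D}
  | k + 1 => {E | ∃ A ∈ ds k, ∃ B ∈ ds k, E = A ∘ₗ B - B ∘ₗ A}

/- ### Auxiliary lemmas -/

@[simp] lemma br_c0 (x y : V6) : br x y 0 = 0 := rfl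
@[simp] lemma br_c1 (x y : V6) : br x y 1 = 0 := rfl
@[simp] lemma br_c2 (x y : V6) : br x y 2 = x 0 * y 1 - x 1 * y 0 := rfl
@[simp] lemma br_c3 (x y : V6) : br x y 3 = x 0 * y 2 - x 2 * y 0 := rfl
@[simp] lemma br_c4 (x y : V6) : br x y 4 = x 0 * y 3 - x 3 * y 0 := rfl
@[simp] lemma br_c5 (x y : V6) : br x y 5 = x 0 * y 4 - x 4 * y 0 := rfl

@[simp] lemma e_val (i k : Fin 6) : e i k = if k = i then 1 else 0 := by
  simp [e, Pi.single_apply]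

lemma expand (v : V6) : v = ∑ i : Fin 6, v i • e i := by
  funext k
  rw [Finset.sum_apply]
  simp [e, Pi.single_apply]

lemma upper_zero (D : V6 →ₗ[ℝ] V6) (hD : IsDeriv D) :
    ∀ i j : Fin 6, (i : ℕ) < (j : ℕ) → D (e j) i = 0 := by
  have hb01 : br (e 0) (e 1) = e 2 := by
    funext i; fin_cases i <;> simp [e_val]
  have hb02 : br (e 0) (e 2) = e 3 := by
    funext i; fin_cases i <;> simp [e_val]
  have hb03 : br (e 0) (e 3) = e 4 := by
    funext i; fin_cases i <;> simp [e_val]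
  have hb04 : br (e 0) (e 4) = e 5 := by
    funext i; fin_cases i <;> simp [e_val]
  have hb13 : br (e 1) (e 3) = 0 := by
    funext i; fin_cases i <;> simp [e_val]
  have h1 := hD (e 0) (e 1); rw [hb01] at h1
  have h2 := hD (e 0) (e 2); rw [hb02] at h2
  have h3 := hD (e 0) (e 3); rw [hb03] at h3
  have h4 := hD (e 0) (e 4); rw [hb04] at h4
  have h5 := hD (e 1) (e 3); rw [hb13, map_zero] at h5
  have a01 : D (e 1) 0 = 0 := by
    have := congrFun h5 4
    simp [e_val] at this
    linarith
  have a02 : D (e 2) 0 = 0 := by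
    have := congrFun h1 0; simpa using this
  have a12 : D (e 2) 1 = 0 := by
    have := congrFun h1 1; simpa using this
  have a03 : D (e 3) 0 = 0 := by
    have := congrFun h2 0; simpa using this
  have a13 : D (e 3) 1 = 0 := by
    have := congrFun h2 1; simpa using this
  have a23 : D (e 3) 2 = 0 := by
    have := congrFun h2 2
    simp [e_val] at this
    rw [this, a12]
  have a04 : D (e 4) 0 = 0 := by
    have := congrFun h3 0; simpa using this
  have a14 : D (e 4) 1 = 0 := by
    have := congrFun h3 1; simpa using this
  have a24 : D (e 4) 2 = 0 := by
    have := congrFun h3 2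
    simp [e_val] at this
    rw [this, a13]
  have a34 : D (e 4) 3 = 0 := by
    have := congrFun h3 3
    simp [e_val] at this
    rw [this, a23]
  have a05 : D (e 5) 0 = 0 := by
    have := congrFun h4 0; simpa using this
  have a15 : D (e 5) 1 = 0 := by
    have := congrFun h4 1; simpa using this
  have a25 : D (e 5) 2 = 0 := by
    have := congrFun h4 2
    simp [e_val] at this
    rw [this, a14]
  have a35 : D (e 5) 3 = 0 := by
    have := congrFun h4 3
    simp [e_val] at this
    rw [this, a24]
  have a45 : D (e 5) 4 = 0 := by
    have := congrFun h4 4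
    simp [e_val] at this
    rw [this, a34]
  intro i j hij
  fin_cases i <;> fin_cases j <;>
    first
      | assumption
      | (exfalso; revert hij; norm_num)

lemma mem_lower (j : Fin 6) (v : V6) (h : ∀ i : Fin 6, (i : ℕ) < (j : ℕ) → v i = 0) :
    v ∈ span ℝ {w : V6 | ∃ i : Fin 6, j ≤ i ∧ w = e i} := by
  rw [show v = ∑ i : Fin 6, v i • e i from expand v]
  refine sum_mem fun i _ => ?_
  by_cases hi : (i : ℕ) < (j : ℕ)
  · rw [h i hi]; simp
  · exact smul_mem _ _ (subset_span ⟨i, by rwa [Fin.le_def, ← not_lt], rfl⟩)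

/-- entries are "below the `d`-th subdiagonal" -/
def LTd (d : ℕ) (E : V6 →ₗ[ℝ] V6) : Prop :=
  ∀ i j : Fin 6, (i : ℕ) < (j : ℕ) + d → E (e j) i = 0

lemma comp_entry (A B : V6 →ₗ[ℝ] V6) (i j : Fin 6) :
    (A ∘ₗ B) (e j) i = ∑ k : Fin 6, (B (e j)) k * (A (e k)) i := by
  rw [LinearMap.comp_apply]
  conv_lhs => rw [expand (B (e j))]
  rw [map_sum, Finset.sum_apply]
  simp [smul_eq_mul]

lemma LTd_comp {d d' : ℕ} {A B : V6 →ₗ[ℝ] V6} (hA : LTd d A) (hB : LTd d' B) :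
    ∀ i j : Fin 6, (i : ℕ) < (j : ℕ) + d' + d → (A ∘ₗ B) (e j) i = 0 := by
  intro i j h
  rw [comp_entry]
  refine Finset.sum_eq_zero fun k _ => ?_
  by_cases hk : (k : ℕ) < (j : ℕ) + d'
  · rw [hB k j hk]; ring
  · rw [hA i k (by omega)]; ring

lemma LTd_sub {d : ℕ} {A B : V6 →ₗ[ℝ] V6} (hA : LTd d A) (hB : LTd d B) :
    LTd d (A - B) := by
  intro i j h
  simp [LinearMap.sub_apply, hA i j h, hB i j h]

lemma LTd_bracket0 {A B : V6 →ₗ[ℝ] V6} (hA : LTd 0 A) (hB : LTd 0 B) :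
    LTd 1 (A ∘ₗ B - B ∘ₗ A) := by
  intro i j h
  rcases lt_or_eq_of_le (Nat.lt_succ_iff.mp h) with hlt | heq
  · have h1 := LTd_comp hA hB i j (by omega)
    have h2 := LTd_comp hB hA i j (by omega)
    simp only [LinearMap.sub_apply, Pi.sub_apply, h1, h2, sub_zero]
  · have hij : i = j := Fin.ext heq
    subst hij
    have key : ∀ C C' : V6 →ₗ[ℝ] V6, LTd 0 C → LTd 0 C' →
        (C ∘ₗ C') (e i) i = C' (e i) i * C (e i) i := by
      intro C C' hC hC'
      rw [comp_entry]
      refine Finset.sum_eq_single i (fun k _ hk => ?_) (by simp)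
      rcases lt_or_gt_of_ne (fun hv => hk (Fin.ext hv) : (k : ℕ) ≠ (i : ℕ)) with hv | hv
      · rw [hC' k i (by omega)]; ring
      · rw [hC i k (by omega)]; ring
    rw [LinearMap.sub_apply, Pi.sub_apply, key A B hA hB, key B A hB hA]
    ring

lemma LTd_zero {E : V6 →ₗ[ℝ] V6} (h : LTd 6 E) : E = 0 := by
  refine LinearMap.ext fun x => ?_
  rw [show x = ∑ i : Fin 6, x i • e i from expand x, map_sum]
  have hz : ∀ j : Fin 6, E (e j) = 0 := by
    intro j
    funext i
    exact h i j (by omega)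
  simp [hz]

lemma ds_LTd : (∀ E ∈ ds 1, LTd 1 E) ∧ (∀ E ∈ ds 2, LTd 2 E) ∧
    (∀ E ∈ ds 3, LTd 4 E) ∧ (∀ E ∈ ds 4, LTd 8 E) := by
  have h0 : ∀ E ∈ ds 0, LTd 0 E := by
    intro E hE i j h
    exact upper_zero E hE i j (by omega)
  have h1 : ∀ E ∈ ds 1, LTd 1 E := by
    rintro E ⟨A, hA, B, hB, rfl⟩
    exact LTd_bracket0 (h0 A hA) (h0 B hB)
  have step : ∀ (n d : ℕ), (∀ E ∈ ds n, LTd d E) → ∀ E ∈ ds (n+1), LTd (d + d) E := by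
    rintro n d hn E ⟨A, hA, B, hB, rfl⟩
    refine LTd_sub (fun i j h => ?_) (fun i j h => ?_)
    · exact LTd_comp (hn A hA) (hn B hB) i j (by omega)
    · exact LTd_comp (hn B hB) (hn A hA) i j (by omega)
  have h2 := step 1 1 h1
  have h3 := step 2 2 h2
  have h4 := step 3 4 h3
  exact ⟨h1, h2, h3, h4⟩

theorem h28_derivations_lower_triangular_and_solvable :
    (∀ D : V6 →ₗ[ℝ] V6, IsDeriv D →
      ∀ j : Fin 6, D (e j) ∈ span ℝ {v : V6 | ∃ i : Fin 6, j ≤ i ∧ v = e i}) ∧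
    (∃ n : ℕ, ∀ E ∈ ds n, E = 0) := by
  constructor
  · intro D hD j
    exact mem_lower j _ (fun i hi => upper_zero D hD i j hi)
  · refine ⟨4, fun E hE => ?_⟩
    have h8 := ds_LTd.2.2.2 E hE
    exact LTd_zero (fun i j h => h8 i j (by omega))
end

section
/- Let h28 = (0,0,12,13,14,15) and let g be any inner product on h28. Then the symmetry subspace s_g = { Y : g([X,Y],Z) + g([X,Z],Y) + g([Y,Z],X) = 0 for all X,Z } intersects the center R·e6 trivially: if e6 ∈ s_g then g is degenerate, a contradiction; hence Z(h28) ∩ s_g = 0. -/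
open Submodule

theorem h28_center_meets_symmetry_trivially
    (B : V6 →ₗ[ℝ] V6 →ₗ[ℝ] ℝ)
    (hsymm : ∀ x y, B x y = B y x)
    (hpos : ∀ x : V6, x ≠ 0 → 0 < B x x) :
    ∀ Y ∈ (span ℝ {e 5} : Submodule ℝ V6),
      (∀ X Z : V6, B (br X Y) Z + B (br X Z) Y + B (br Y Z) X = 0) → Y = 0 := by
  intro Y hY h
  rw [mem_span_singleton] at hY
  obtain ⟨c, rfl⟩ := hY
  rcases eq_or_ne c 0 with hc | hc
  · simp [hc]
  exfalso
  have hkey := h (e 0) (e 4)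
  have h1 : br (e 0) (c • e 5) = 0 := by
    funext i
    fin_cases i <;> simp [br, e, Pi.single_apply] <;> rfl
  have h2 : br (e 0) (e 4) = e 5 := by
    funext i
    fin_cases i <;> simp [br, e, Pi.single_apply] <;> rfl
  have h3 : br (c • e 5) (e 4) = 0 := by
    funext i
    fin_cases i <;> simp [br, e, Pi.single_apply] <;> rfl
  rw [h1, h2, h3] at hkey
  simp only [map_zero, LinearMap.zero_apply, zero_add, add_zero, map_smul, smul_eq_mul] at hkey
  have he5 : (e 5 : V6) ≠ 0 := by
    intro hz
    have := congrFun hz 5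
    simp [e, Pi.single_apply] at this
  have := hpos (e 5) he5
  rcases mul_eq_zero.mp hkey with h' | h'
  · exact hc h'
  · linarith
end

section
/- For the Lie algebra h28 = (0,0,12,13,14,15) equipped with the standard inner product making e1,...,e6 orthonormal, the symmetry subspace s = { Y : ⟨[X,Y],Z⟩ + ⟨[X,Z],Y⟩ + ⟨[Y,Z],X⟩ = 0 for all X,Z } is the one-dimensional subspace spanned by e2 - e4 + e6. -/
open Submodule

/-- The inner product making e1, ..., e6 orthonormal. -/
def ip (x y : V6) : ℝ := ∑ i, x i * y i


lemma cons_val_five {α} (x : α) (u : Fin 5 → α) :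
    Matrix.vecCons x u 5 = Matrix.vecHead (Matrix.vecTail (Matrix.vecTail (Matrix.vecTail (Matrix.vecTail u)))) :=
  rfl

theorem h28_symmetry_std :
    ∀ Y : V6,
      (∀ X Z : V6, ip (br X Y) Z + ip (br X Z) Y + ip (br Y Z) X = 0) ↔
      Y ∈ span ℝ {e 1 - e 3 + e 5} := by
  intro Y
  constructor
  · intro h
    have h02 := h (e 0) (e 2)
    have h03 := h (e 0) (e 3)
    have h04 := h (e 0) (e 4)
    have h05 := h (e 0) (e 5)
    have h12 := h (e 1) (e 2)
    simp [ip, br, e, Pi.single_apply, Fin.sum_univ_six, cons_val_five] at h02 h03 h04 h05 h12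
    rw [mem_span_singleton]
    refine ⟨Y 1, ?_⟩
    funext i
    fin_cases i <;>
      simp [e, Pi.single_apply] <;> linarith
  · intro hmem
    rw [mem_span_singleton] at hmem
    obtain ⟨t, ht⟩ := hmem
    intro X Z
    have hY : ∀ i, Y i = t * (e 1 i - e 3 i + e 5 i) := by
      intro i; rw [← ht]; simp
    simp only [ip, br, Fin.sum_univ_six, hY]
    simp [e, Pi.single_apply, cons_val_five]
    ring
end

section
/- For the Lie algebra h28 = (0,0,12,13,14,15) equipped with the inner product g given by g(e1,e1)=g(e2,e2)=1, g(e3,e3)=2, g(e4,e4)=5, g(e5,e5)=1, g(e6,e6)=1, g(e3,e5)=1, g(e4,e6)=2, and all other pairings zero, the symmetry subspace s = { Y : g([X,Y],Z) + g([X,Z],Y) + g([Y,Z],X) = 0 for all X,Z } is 3-dimensional, spanned by e2 - e6, e3 - 2 e5, and e4 - 3 e6. -/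
open Submodule

/-- The inner product with Gram matrix
[[1,0,0,0,0,0],[0,1,0,0,0,0],[0,0,2,0,1,0],[0,0,0,5,0,2],[0,0,1,0,1,0],[0,0,0,2,0,1]]. -/
def g12 (x y : V6) : ℝ :=
  x 0 * y 0 + x 1 * y 1 + 2 * x 2 * y 2 + 5 * x 3 * y 3 + x 4 * y 4 + x 5 * y 5
    + x 2 * y 4 + x 4 * y 2 + 2 * (x 3 * y 5) + 2 * (x 5 * y 3)

lemma cons5 {α : Type*} (a b c d f h : α) : ![a,b,c,d,f,h] 5 = h := rfl

lemma cons2 {α : Type*} (a b c d f h : α) : ![a,b,c,d,f,h] 2 = c := rfl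

lemma cons3 {α : Type*} (a b c d f h : α) : ![a,b,c,d,f,h] 3 = d := rfl

lemma cons4 {α : Type*} (a b c d f h : α) : ![a,b,c,d,f,h] 4 = f := rfl

lemma hv1 : e 1 - e 5 = ![0,1,0,0,0,-1] := by
  funext i; fin_cases i <;> simp [e, Pi.single_apply, cons5]

lemma hv2 : e 2 - (2:ℝ) • e 4 = ![0,0,1,0,-2,0] := by
  funext i; fin_cases i <;> simp [e, Pi.single_apply, cons5]

lemma hv3 : e 3 - (3:ℝ) • e 5 = ![0,0,0,1,0,-3] := by
  funext i; fin_cases i <;> simp [e, Pi.single_apply, cons5]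

lemma mem_span_iff (Y : V6) :
    Y ∈ span ℝ {e 1 - e 5, e 2 - (2 : ℝ) • e 4, e 3 - (3 : ℝ) • e 5} ↔
      Y 0 = 0 ∧ Y 4 = -2 * Y 2 ∧ Y 5 = -(Y 1) - 3 * Y 3 := by
  constructor
  · intro h
    refine Submodule.span_induction ?_ ?_ ?_ ?_ h
    · rintro x (rfl | rfl | rfl)
      · rw [hv1]; norm_num [cons5, cons2, cons3, cons4]
      · rw [hv2]; norm_num [cons5, cons2, cons3, cons4]
      · rw [hv3]; norm_num [cons5, cons2, cons3, cons4]
    · norm_num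
    · rintro x y - - ⟨hx0, hx4, hx5⟩ ⟨hy0, hy4, hy5⟩
      refine ⟨?_, ?_, ?_⟩ <;> simp [Pi.add_apply, hx0, hx4, hx5, hy0, hy4, hy5] <;> ring
    · rintro a x - ⟨hx0, hx4, hx5⟩
      refine ⟨?_, ?_, ?_⟩ <;> simp [Pi.smul_apply, hx0, hx4, hx5] <;> ring
  · rintro ⟨h0, h4, h5⟩
    have hY : Y = Y 1 • (e 1 - e 5) + Y 2 • (e 2 - (2 : ℝ) • e 4)
        + Y 3 • (e 3 - (3 : ℝ) • e 5) := by
      rw [hv1, hv2, hv3]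
      funext i
      fin_cases i <;>
        simp [cons5, h0, h4, h5] <;> ring
    rw [hY]
    refine add_mem (add_mem (smul_mem _ _ ?_) (smul_mem _ _ ?_)) (smul_mem _ _ ?_) <;>
      apply subset_span <;> simp

theorem h28_symmetry_g12 :
    (∀ Y : V6,
      (∀ X Z : V6, g12 (br X Y) Z + g12 (br X Z) Y + g12 (br Y Z) X = 0) ↔
      Y ∈ span ℝ {e 1 - e 5, e 2 - (2 : ℝ) • e 4, e 3 - (3 : ℝ) • e 5}) ∧
    Module.finrank ℝ
      (span ℝ {e 1 - e 5, e 2 - (2 : ℝ) • e 4, e 3 - (3 : ℝ) • e 5} : Submodule ℝ V6) = 3 := by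
  constructor
  · intro Y
    rw [mem_span_iff]
    constructor
    · intro h
      have h1 := h ![0, 1, 0, 0, 0, 0] ![0, 0, 1, 0, 0, 0]
      have h2 := h ![1, 0, 0, 0, 0, 0] ![0, 1, 0, 0, 0, 0]
      have h3 := h ![1, 0, 0, 0, 0, 0] ![0, 0, 1, 0, 0, 0]
      norm_num [g12, br, cons5, cons2, cons3, cons4] at h1 h2 h3
      refine ⟨?_, by linarith, by linarith⟩
      linarith
    · rintro ⟨h0, h4, h5⟩ X Z
      simp only [g12, br, Matrix.cons_val_zero, Matrix.cons_val_one, Matrix.head_cons,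
        Matrix.cons_val_two, Matrix.tail_cons, Matrix.cons_val_three, Matrix.cons_val_four,
        cons5]
      rw [h0, h4, h5]
      ring
  · have hli : LinearIndependent ℝ
        ![e 1 - e 5, e 2 - (2 : ℝ) • e 4, e 3 - (3 : ℝ) • e 5] := by
      rw [hv1, hv2, hv3, Fintype.linearIndependent_iff]
      intro c hc
      have h1 := congrFun hc 1
      have h2 := congrFun hc 2
      have h3 := congrFun hc 3
      simp [Fin.sum_univ_three, cons5, Matrix.vecHead, Matrix.vecTail] at h1 h2 h3
      intro i
      fin_cases i
      · simpa using h1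
      · simpa using h2
      · simpa using h3
    have hcard := finrank_span_eq_card (R := ℝ) hli
    have hrange : Set.range ![e 1 - e 5, e 2 - (2 : ℝ) • e 4, e 3 - (3 : ℝ) • e 5]
        = {e 1 - e 5, e 2 - (2 : ℝ) • e 4, e 3 - (3 : ℝ) • e 5} := by
      ext x
      simp only [Set.mem_range, Set.mem_insert_iff, Set.mem_singleton_iff]
      constructor
      · rintro ⟨i, rfl⟩
        fin_cases i
        · exact Or.inl rfl
        · exact Or.inr (Or.inl rfl)
        · exact Or.inr (Or.inr rfl)
      · rintro (rfl | rfl | rfl)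
        exacts [⟨0, rfl⟩, ⟨1, rfl⟩, ⟨2, rfl⟩]
    rw [hrange] at hcard
    simpa using hcard
end
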